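/- arXiv:2501.13476 — 2 statements merged into one kernel-verified Lean document; each statement's English description precedes it below -/
import Mathlib

section
/- Let Λ = KQ be the path algebra of a finite acyclic quiver Q over an algebraically closed field K, and let S be a finite semibrick. Assume a brick B ∈ S is not exceptional (i.e., Ext^1_Λ(B,B) ≠ 0). Then there exists a brick B' such that S ⊔ {B'} is a semibrick and the dimension vector of B' is a positive integer multiple of the dimension vector of B. -/
/-!
Common setup: representation schemes of a finite dimensional algebra `Λ = KQ/I`
(`Q` a finite quiver, `I` an admissible ideal), following the paper.
-/

namespace RepScheme

variable (K : Type) [Field K]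
variable (Q0 Q1 : Type) [Fintype Q0] [Fintype Q1]
variable (s t : Q1 → Q0)

/-- The Zariski topology on the affine space `σ → K`: generated by the complements of
hypersurfaces; its closed sets are exactly the common zero loci of sets of polynomials. -/
def zariskiTopology (σ : Type) : TopologicalSpace (σ → K) :=
  TopologicalSpace.generateFrom
    {U | ∃ p : MvPolynomial σ K, U = {x | MvPolynomial.eval x p ≠ 0}}

/-- The representation space `rep(Q,d)` of the quiver `Q` for the dimension vector `d`. -/
def Rep (d : Q0 → ℕ) : Type :=
  ∀ a : Q1, Matrix (Fin (d (t a))) (Fin (d (s a))) K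

/-- `rep(Q,d)` carries the Zariski topology, transported from its affine coordinates. -/
instance (d : Q0 → ℕ) : TopologicalSpace (Rep K Q0 Q1 s t d) :=
  TopologicalSpace.induced
    (fun M (x : Σ a : Q1, Fin (d (t a)) × Fin (d (s a))) => M x.1 x.2.1 x.2.2)
    (zariskiTopology K _)

/-- Paths in the quiver `Q`. -/
inductive QPath : Q0 → Q0 → Type where
  | nil (i : Q0) : QPath i i
  | cons {i j : Q0} (p : QPath i j) (a : Q1) (ha : s a = j) : QPath i (t a)

/-- The length of a path. -/
def QPath.length : ∀ {i j : Q0}, QPath Q0 Q1 s t i j → ℕ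
  | _, _, .nil _ => 0
  | _, _, .cons p _ _ => QPath.length p + 1

/-- Evaluation of a path in a point of `rep(Q,d)` (composition of the corresponding matrices). -/
def evalPath {d : Q0 → ℕ} (M : Rep K Q0 Q1 s t d) :
    ∀ {i j : Q0}, QPath Q0 Q1 s t i j → Matrix (Fin (d j)) (Fin (d i)) K
  | _, _, .nil _ => 1
  | _, _, .cons p a ha =>
      M a * (Matrix.reindex (finCongr (congrArg d ha)).symm (Equiv.refl _) (evalPath M p))

/-- Hom space `Hom_Λ(M, N)` between two representation points, as a `K`-subspace of the space
of tuples of matrices. -/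
def RepHom {d c : Q0 → ℕ} (M : Rep K Q0 Q1 s t d) (N : Rep K Q0 Q1 s t c) :
    Submodule K (∀ i : Q0, Matrix (Fin (c i)) (Fin (d i)) K) where
  carrier := {f | ∀ a : Q1, f (t a) * M a = N a * f (s a)}
  add_mem' := fun hf hg => by
    intro a
    simp only [Pi.add_apply, Matrix.add_mul, Matrix.mul_add]
    rw [hf a, hg a]
  zero_mem' := by intro a; simp
  smul_mem' := fun c f hf => by
    intro a
    simp only [Pi.smul_apply, Matrix.smul_mul, Matrix.mul_smul]
    rw [hf a]

/-- A representation point is a brick if its endomorphism ring is `K`,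
i.e. one-dimensional over `K`. -/
def IsBrick {d : Q0 → ℕ} (M : Rep K Q0 Q1 s t d) : Prop :=
  Module.finrank K (RepHom K Q0 Q1 s t M M) = 1

/-! ### Path algebras `Λ = KQ` of finite acyclic quivers -/

/-- The quiver `Q` is acyclic: every cycle is trivial. -/
def IsAcyclic : Prop :=
  ∀ (i : Q0) (p : QPath Q0 Q1 s t i i), p = QPath.nil i

/-- A finite dimensional module over the path algebra `Λ = KQ`, regarded as a point of
`rep(Q,d)` for its dimension vector `d`. -/
def ModPtP : Type := Σ d : Q0 → ℕ, Rep K Q0 Q1 s t d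

/-- A set of `KQ`-modules is a semibrick if its elements are bricks and there are no
nonzero homomorphisms between distinct elements. -/
def IsSemibrickP (S : Set (ModPtP K Q0 Q1 s t)) : Prop :=
  (∀ B ∈ S, IsBrick K Q0 Q1 s t B.2) ∧
  ∀ B ∈ S, ∀ B' ∈ S, B ≠ B' → RepHom K Q0 Q1 s t B.2 B'.2 = ⊥

/-- For representations of the (hereditary) path algebra `KQ`, the self-extension space
`Ext¹(M,N)` is the cokernel of this map; in particular `Ext¹(M,N) = 0` iff it is surjective. -/
def extMap {d c : Q0 → ℕ} (M : Rep K Q0 Q1 s t d) (N : Rep K Q0 Q1 s t c) :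
    (∀ i : Q0, Matrix (Fin (c i)) (Fin (d i)) K) →ₗ[K]
      (∀ a : Q1, Matrix (Fin (c (t a))) (Fin (d (s a))) K) where
  toFun f := fun a => f (t a) * M a - N a * f (s a)
  map_add' f g := by
    funext a
    simp only [Pi.add_apply, Matrix.add_mul, Matrix.mul_add]
    abel
  map_smul' k f := by
    funext a
    simp only [Pi.smul_apply, Matrix.smul_mul, Matrix.mul_smul, smul_sub, RingHom.id_apply]

/-- A brick `B` over the path algebra is exceptional if `Ext¹(B,B) = 0`. -/
def IsExceptional {d : Q0 → ℕ} (B : Rep K Q0 Q1 s t d) : Prop :=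
  IsBrick K Q0 Q1 s t B ∧ Function.Surjective (extMap K Q0 Q1 s t B B)

end RepScheme

/-!
Write `B = (d, M)` and choose `Z ∈ rep(Q,d)` outside the image of `extMap M M`, i.e. a nonzero
class in `Ext¹(B,B)`. The new brick is `M + τ • Z` for a generic `τ ∈ K` (so `l = 1`).

Hom spaces between one-parameter deformations `U + τ • Z` and `W + τ • Z'` are kernels of pencils
`L₀ + τ • L₁` with `L₀ = extMap U W`, `L₁ = extMap Z Z'`. A pencil of linear maps between
finite-dimensional spaces is injective for all but finitely many `τ` as soon as no nonzero
`u ∈ ker L₀` has `L₁ u ∈ range L₀`: this kills every power series solution of `(L₀ + X L₁) v = 0`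
coefficient by coefficient, so the polynomial matrix of the pencil is injective over `K[X]`, hence
has a left inverse up to a nonzero scalar `q ∈ K[X]`, and it stays injective wherever `q(τ) ≠ 0`.

The condition holds for `Hom(N, B_τ)` and `Hom(B_τ, N)`, `N ∈ S \ {B}`, since `Hom(N,B) = 0 =
Hom(B,N)`; for `Hom(B, B_τ)` and `Hom(B_τ, B)` since `End(B) = K` and `±Z ∉ range (extMap M M)`;
and, after adjoining a linear form that does not vanish on `1`, for `End(B_τ)`, which is therefore
one-dimensional. As `K` is infinite and `S` finite, some `τ` avoids all bad values.
-/

open Polynomial Matrix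

theorem Matrix.exists_mul_eq_smul_one_of_mulVec_injective {R : Type*} [CommRing R] [IsDomain R]
    {m n : Type*} [Fintype m] [Fintype n] [DecidableEq n] {A : Matrix m n R}
    (hA : Function.Injective A.mulVec) : ∃ (P : Matrix n m R) (q : R), q ≠ 0 ∧ P * A = q • 1 := by
  classical
  let F := FractionRing R
  have hinj : Function.Injective (algebraMap R F) := IsFractionRing.injective R F
  have hF : LinearMap.ker (toLin' (A.map (algebraMap R F))) = ⊥ := by
    rw [LinearMap.ker_eq_bot, toLin'_apply', coe_mulVecLin, mulVec_injective_iff,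
      ← LinearIndependent.iff_fractionRing R F]
    refine (mulVec_injective_iff.mp hA).map' ((Algebra.linearMap R F).compLeft m) ?_
    exact LinearMap.ker_eq_bot.mpr fun x y h => funext fun i => hinj (congrFun h i)
  obtain ⟨g, hg⟩ := LinearMap.exists_leftInverse_of_injective _ hF
  have hgA : LinearMap.toMatrix' g * A.map (algebraMap R F) = 1 := by
    simpa [LinearMap.toMatrix'_comp] using congrArg LinearMap.toMatrix' hg
  obtain ⟨b, hb⟩ := IsLocalization.exist_integer_multiples_of_finite (nonZeroDivisors R)
    (fun p : n × m => LinearMap.toMatrix' g p.1 p.2)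
  choose P hP using hb
  have hPF : (of fun i j => P (i, j)).map (algebraMap R F) = (b : R) • LinearMap.toMatrix' g := by
    ext i j
    exact hP (i, j)
  refine ⟨of fun i j => P (i, j), b, nonZeroDivisors.coe_ne_zero b, map_injective hinj ?_⟩
  dsimp only
  rw [Matrix.map_mul, hPF, smul_mul, hgA]
  ext i j
  rw [map_apply, smul_apply, smul_apply, one_apply, one_apply]
  split_ifs <;> simp [Algebra.smul_def]

theorem Matrix.finite_setOf_not_injective_mulVec_map_eval {K : Type*} [Field K]
    {m n : Type*} [Fintype m] [Fintype n] {A : Matrix m n K[X]}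
    (hA : Function.Injective A.mulVec) :
    {τ : K | ¬ Function.Injective (A.map (eval τ)).mulVec}.Finite := by
  classical
  obtain ⟨P, q, hq, hPA⟩ := A.exists_mul_eq_smul_one_of_mulVec_injective hA
  refine (finite_setOfPred_isRoot hq).subset fun τ hτ => ?_
  by_contra hroot
  apply hτ
  have hPA_eval : P.map (eval τ) * A.map (eval τ) = q.eval τ • 1 := by
    rw [← coe_evalRingHom, ← Matrix.map_mul, hPA]
    ext i j
    rw [map_apply, smul_apply, smul_apply, one_apply, one_apply]
    split_ifs <;> simp
  intro v w hvw
  have := congrArg (P.map (eval τ) *ᵥ ·) hvw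
  simp only [mulVec_mulVec, hPA_eval, smul_mulVec, one_mulVec] at this
  exact smul_right_injective _ hroot this

theorem LinearMap.eq_zero_of_pencil_seq {R M N : Type*} [Ring R] [AddCommGroup M]
    [AddCommGroup N] [Module R M] [Module R N] {L₀ L₁ : M →ₗ[R] N}
    (h : Disjoint (ker L₀) ((range L₀).comap L₁)) {v : ℕ → M} (h0 : L₀ (v 0) = 0)
    (hsucc : ∀ k, L₀ (v (k + 1)) + L₁ (v k) = 0) : v = 0 := by
  have hker (k : ℕ) (hk : L₀ (v k) = 0) : v k = 0 :=
    Submodule.disjoint_def.mp h _ hk ⟨-v (k + 1), by rw [map_neg, neg_eq_iff_add_eq_zero, hsucc k]⟩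
  funext k
  induction k with
  | zero => exact hker 0 h0
  | succ k ih => exact hker (k + 1) (by simpa [ih] using hsucc k)

theorem Matrix.coeff_map_C_mulVec {R : Type*} [CommRing R] {m n : Type*} [Fintype n]
    (A : Matrix m n R) (v : n → R[X]) (k : ℕ) (i : m) :
    ((A.map C *ᵥ v) i).coeff k = (A *ᵥ fun j => (v j).coeff k) i := by
  simp [mulVec, dotProduct, finsetSum_coeff, coeff_C_mul]

theorem Matrix.mulVec_injective_map_C_add_X_smul {R : Type*} [CommRing R] {m n : Type*}
    [Fintype n] {A₀ A₁ : Matrix m n R}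
    (h : Disjoint (LinearMap.ker A₀.mulVecLin)
      ((LinearMap.range A₀.mulVecLin).comap A₁.mulVecLin)) :
    Function.Injective (A₀.map C + (X : R[X]) • A₁.map C).mulVec := by
  refine (injective_iff_map_eq_zero (mulVecLin _)).2 fun v hv => ?_
  rw [mulVecLin_apply, add_mulVec, smul_mulVec] at hv
  have hcoeff (k : ℕ) (i : m) := congrArg (fun w : m → R[X] => (w i).coeff k) hv
  have hu := LinearMap.eq_zero_of_pencil_seq h (v := fun k j => (v j).coeff k) ?_ ?_
  · funext j
    ext k
    exact congrFun (congrFun hu k) j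
  · funext i
    simpa [coeff_map_C_mulVec] using hcoeff 0 i
  · intro k
    funext i
    simpa [coeff_map_C_mulVec, coeff_X_mul] using hcoeff (k + 1) i

theorem Matrix.finite_setOf_not_injective_add_smul {K : Type*} [Field K] {m n : Type*}
    [Fintype m] [Fintype n] {A₀ A₁ : Matrix m n K}
    (h : Disjoint (LinearMap.ker A₀.mulVecLin)
      ((LinearMap.range A₀.mulVecLin).comap A₁.mulVecLin)) :
    {τ : K | ¬ Function.Injective (A₀ + τ • A₁).mulVec}.Finite := by
  have heval (τ : K) : (A₀.map C + (X : K[X]) • A₁.map C).map (eval τ) = A₀ + τ • A₁ := by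
    ext i j
    simp [mul_comm τ]
  simpa only [heval] using
    finite_setOf_not_injective_mulVec_map_eval (mulVec_injective_map_C_add_X_smul h)

theorem LinearMap.finite_setOf_not_injective_add_smul {K V W : Type*} [Field K]
    [AddCommGroup V] [Module K V] [FiniteDimensional K V]
    [AddCommGroup W] [Module K W] [FiniteDimensional K W] {L₀ L₁ : V →ₗ[K] W}
    (h : Disjoint (ker L₀) ((range L₀).comap L₁)) :
    {τ : K | ¬ Function.Injective (L₀ + τ • L₁)}.Finite := by
  let b := Module.finBasis K V
  let c := Module.finBasis K W
  have hmulVec (L : V →ₗ[K] W) (u) : toMatrix b c L *ᵥ u = c.equivFun (L (b.equivFun.symm u)) := by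
    have := toMatrix_mulVec_repr b c L (b.equivFun.symm u)
    rwa [← b.equivFun_apply, b.equivFun.apply_symm_apply, ← c.equivFun_apply] at this
  have hinj (L : V →ₗ[K] W) :
      Function.Injective L ↔ Function.Injective (toMatrix b c L).mulVec := by
    rw [← EquivLike.comp_injective L c.equivFun, ← EquivLike.injective_comp b.equivFun.symm]
    exact Iff.of_eq (congrArg _ (funext fun u => (hmulVec L u).symm))
  have hA : Disjoint (ker (toMatrix b c L₀).mulVecLin)
      ((range (toMatrix b c L₀).mulVecLin).comap (toMatrix b c L₁).mulVecLin) := by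
    rw [Submodule.disjoint_def] at h ⊢
    rintro u hu₀ ⟨w, hw⟩
    rw [mem_ker, mulVecLin_apply, hmulVec, LinearEquiv.map_eq_zero_iff] at hu₀
    rw [mulVecLin_apply, mulVecLin_apply, hmulVec, hmulVec] at hw
    exact (LinearEquiv.map_eq_zero_iff b.equivFun.symm).mp
      (h _ hu₀ ⟨b.equivFun.symm w, c.equivFun.injective hw⟩)
  simpa only [hinj, map_add, map_smul] using Matrix.finite_setOf_not_injective_add_smul hA

theorem LinearMap.finrank_ker_le_one_of_injective_prod {K V W : Type*} [Field K]
    [AddCommGroup V] [Module K V] [AddCommGroup W] [Module K W] {L : V →ₗ[K] W}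
    {φ : V →ₗ[K] K} (h : Function.Injective (L.prod φ)) : Module.finrank K (ker L) ≤ 1 := by
  have hφ : Function.Injective (φ ∘ₗ (ker L).subtype) := fun x y hxy =>
    Subtype.ext <| h <| Prod.ext (by simp) hxy
  simpa using finrank_le_finrank_of_injective hφ

namespace RepScheme

open LinearMap Module

variable {K : Type} [Field K] {Q0 Q1 : Type} {s t : Q1 → Q0}

instance (d : Q0 → ℕ) : AddCommGroup (Rep K Q0 Q1 s t d) :=
  inferInstanceAs (AddCommGroup (∀ a : Q1, Matrix (Fin (d (t a))) (Fin (d (s a))) K))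

instance (d : Q0 → ℕ) : Module K (Rep K Q0 Q1 s t d) :=
  inferInstanceAs (Module K (∀ a : Q1, Matrix (Fin (d (t a))) (Fin (d (s a))) K))

theorem repHom_eq_ker_extMap {d c : Q0 → ℕ} (M : Rep K Q0 Q1 s t d) (N : Rep K Q0 Q1 s t c) :
    RepHom K Q0 Q1 s t M N = ker (extMap K Q0 Q1 s t M N) := by
  ext f
  simp [RepHom, extMap, funext_iff, sub_eq_zero]

theorem extMap_add_smul {d c : Q0 → ℕ} (M Z : Rep K Q0 Q1 s t d) (N Z' : Rep K Q0 Q1 s t c)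
    (τ : K) : extMap K Q0 Q1 s t (M + τ • Z) (N + τ • Z') =
      extMap K Q0 Q1 s t M N + τ • extMap K Q0 Q1 s t Z Z' := by
  ext f a : 2
  change f (t a) * (M a + τ • Z a) - (N a + τ • Z' a) * f (s a) =
    f (t a) * M a - N a * f (s a) + τ • (f (t a) * Z a - Z' a * f (s a))
  simp only [Matrix.mul_add, Matrix.add_mul, Matrix.mul_smul, Matrix.smul_mul, smul_sub]
  abel

theorem one_mem_repHom_self {d : Q0 → ℕ} (M : Rep K Q0 Q1 s t d) :
    (1 : ∀ i, Matrix (Fin (d i)) (Fin (d i)) K) ∈ RepHom K Q0 Q1 s t M M := by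
  intro a
  simp

theorem repHom_self_ne_bot {d : Q0 → ℕ} {M : Rep K Q0 Q1 s t d}
    (h1 : (1 : ∀ i, Matrix (Fin (d i)) (Fin (d i)) K) ≠ 0) : RepHom K Q0 Q1 s t M M ≠ ⊥ :=
  fun h => h1 ((Submodule.mem_bot K).mp (h ▸ one_mem_repHom_self M))

theorem IsBrick.one_ne_zero {d : Q0 → ℕ} {M : Rep K Q0 Q1 s t d} (hM : IsBrick K Q0 Q1 s t M) :
    (1 : ∀ i, Matrix (Fin (d i)) (Fin (d i)) K) ≠ 0 := by
  intro h
  have : RepHom K Q0 Q1 s t M M = ⊥ :=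
    (Submodule.eq_bot_iff _).mpr fun f _ => by rw [← mul_one f, h, mul_zero]
  rw [IsBrick, this, finrank_bot] at hM
  exact zero_ne_one hM

theorem IsSemibrickP.insert_of_repHom_eq_bot {S : Set (ModPtP K Q0 Q1 s t)}
    (hS : IsSemibrickP K Q0 Q1 s t S) {B : ModPtP K Q0 Q1 s t} (hB : IsBrick K Q0 Q1 s t B.2)
    (hhom : ∀ N ∈ S, RepHom K Q0 Q1 s t N.2 B.2 = ⊥ ∧ RepHom K Q0 Q1 s t B.2 N.2 = ⊥) :
    IsSemibrickP K Q0 Q1 s t (insert B S) := by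
  refine ⟨?_, ?_⟩
  · rintro C (rfl | hC)
    exacts [hB, hS.1 C hC]
  · rintro C (rfl | hC) C' (rfl | hC') hne
    exacts [absurd rfl hne, (hhom C' hC').2, (hhom C hC).1, hS.2 C hC C' hC' hne]

theorem IsBrick.exists_smul_one_eq {d : Q0 → ℕ} {M : Rep K Q0 Q1 s t d}
    (hM : IsBrick K Q0 Q1 s t M) {f : ∀ i, Matrix (Fin (d i)) (Fin (d i)) K}
    (hf : f ∈ RepHom K Q0 Q1 s t M M) : ∃ c : K, c • 1 = f := by
  obtain ⟨c, hc⟩ := (finrank_eq_one_iff_of_nonzero' (⟨1, one_mem_repHom_self M⟩ :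
    RepHom K Q0 Q1 s t M M) (by simpa using hM.one_ne_zero)).mp hM ⟨f, hf⟩
  exact ⟨c, congrArg Subtype.val hc⟩

theorem isBrick_of_finrank_le_one [Fintype Q0] {d : Q0 → ℕ} {M : Rep K Q0 Q1 s t d}
    (h1 : (1 : ∀ i, Matrix (Fin (d i)) (Fin (d i)) K) ≠ 0)
    (h : finrank K (RepHom K Q0 Q1 s t M M) ≤ 1) : IsBrick K Q0 Q1 s t M :=
  le_antisymm h (Submodule.one_le_finrank_iff.mpr (repHom_self_ne_bot h1))

theorem IsBrick.disjoint_repHom_comap_range {d : Q0 → ℕ} {M : Rep K Q0 Q1 s t d}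
    (hM : IsBrick K Q0 Q1 s t M)
    {L : (∀ i, Matrix (Fin (d i)) (Fin (d i)) K) →ₗ[K]
      ∀ a, Matrix (Fin (d (t a))) (Fin (d (s a))) K}
    (hL : L 1 ∉ range (extMap K Q0 Q1 s t M M)) :
    Disjoint (RepHom K Q0 Q1 s t M M) ((range (extMap K Q0 Q1 s t M M)).comap L) := by
  rw [Submodule.disjoint_def]
  intro f hf hLf
  obtain ⟨c, rfl⟩ := hM.exists_smul_one_eq hf
  obtain rfl | hc := eq_or_ne c 0
  · exact zero_smul K 1
  · refine absurd ?_ hL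
    simpa [smul_smul, hc] using Submodule.smul_mem _ c⁻¹ hLf

variable [Fintype Q0] [Fintype Q1]

theorem finite_setOf_repHom_add_smul_ne_bot {d c : Q0 → ℕ} (M Z : Rep K Q0 Q1 s t d)
    (N Z' : Rep K Q0 Q1 s t c)
    (h : Disjoint (RepHom K Q0 Q1 s t M N)
      ((range (extMap K Q0 Q1 s t M N)).comap (extMap K Q0 Q1 s t Z Z'))) :
    {τ : K | RepHom K Q0 Q1 s t (M + τ • Z) (N + τ • Z') ≠ ⊥}.Finite := by
  rw [repHom_eq_ker_extMap] at h
  simpa only [repHom_eq_ker_extMap, extMap_add_smul, ne_eq, ker_eq_bot] using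
    finite_setOf_not_injective_add_smul h

theorem IsBrick.finite_setOf_not_isBrick_add_smul {d : Q0 → ℕ} {M : Rep K Q0 Q1 s t d}
    (hM : IsBrick K Q0 Q1 s t M) (Z : Rep K Q0 Q1 s t d) :
    {τ : K | ¬ IsBrick K Q0 Q1 s t (M + τ • Z)}.Finite := by
  obtain ⟨φ, hφ⟩ := Projective.exists_dual_ne_zero K hM.one_ne_zero
  have hinj : Function.Injective ((extMap K Q0 Q1 s t M M).prod φ) := by
    refine (injective_iff_map_eq_zero _).2 fun f hf => ?_
    obtain ⟨c, rfl⟩ :=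
      hM.exists_smul_one_eq ((repHom_eq_ker_extMap M M).ge (congrArg Prod.fst hf))
    have : c * φ 1 = 0 := by simpa using congrArg Prod.snd hf
    simp [(mul_eq_zero.mp this).resolve_right hφ]
  have hpencil := finite_setOf_not_injective_add_smul (L₀ := (extMap K Q0 Q1 s t M M).prod φ)
    (L₁ := (extMap K Q0 Q1 s t Z Z).prod 0) (by simp [ker_eq_bot.mpr hinj])
  refine hpencil.subset fun τ hτ hτinj => hτ (isBrick_of_finrank_le_one hM.one_ne_zero ?_)
  rw [repHom_eq_ker_extMap]
  apply finrank_ker_le_one_of_injective_prod (φ := φ)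
  convert hτinj using 2
  ext f <;> simp [extMap_add_smul]

theorem IsBrick.finite_setOf_repHom_ne_bot_of_notMem_range {d : Q0 → ℕ}
    {M Z : Rep K Q0 Q1 s t d} (hM : IsBrick K Q0 Q1 s t M)
    (hZ : Z ∉ range (extMap K Q0 Q1 s t M M)) :
    {τ : K | RepHom K Q0 Q1 s t M (M + τ • Z) ≠ ⊥ ∨
      RepHom K Q0 Q1 s t (M + τ • Z) M ≠ ⊥}.Finite := by
  have hZ₁ : extMap K Q0 Q1 s t Z 0 1 ∉ range (extMap K Q0 Q1 s t M M) := by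
    rwa [show extMap K Q0 Q1 s t Z 0 1 = Z by ext a : 1; simp [extMap]; rfl]
  have hZ₀ : extMap K Q0 Q1 s t 0 Z 1 ∉ range (extMap K Q0 Q1 s t M M) := by
    rwa [show extMap K Q0 Q1 s t 0 Z 1 = -extMap K Q0 Q1 s t Z 0 1 by ext a : 1; simp [extMap],
      Submodule.neg_mem_iff]
  have h₁ := finite_setOf_repHom_add_smul_ne_bot M 0 M Z (hM.disjoint_repHom_comap_range hZ₀)
  have h₂ := finite_setOf_repHom_add_smul_ne_bot M Z M 0 (hM.disjoint_repHom_comap_range hZ₁)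
  simpa [Set.ofPred_or] using h₁.union h₂

theorem IsSemibrickP.finite_setOf_repHom_ne_bot_of_mem {S : Set (ModPtP K Q0 Q1 s t)}
    (hS : IsSemibrickP K Q0 Q1 s t S) {B N : ModPtP K Q0 Q1 s t} (hB : B ∈ S) (hN : N ∈ S)
    {Z : Rep K Q0 Q1 s t B.1} (hZ : Z ∉ range (extMap K Q0 Q1 s t B.2 B.2)) :
    {τ : K | RepHom K Q0 Q1 s t N.2 (B.2 + τ • Z) ≠ ⊥ ∨
      RepHom K Q0 Q1 s t (B.2 + τ • Z) N.2 ≠ ⊥}.Finite := by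
  obtain rfl | hNB := eq_or_ne N B
  · exact (hS.1 N hB).finite_setOf_repHom_ne_bot_of_notMem_range hZ
  have h₁ := finite_setOf_repHom_add_smul_ne_bot N.2 0 B.2 Z <| by
    rw [hS.2 N hN B hB hNB]
    exact disjoint_bot_left
  have h₂ := finite_setOf_repHom_add_smul_ne_bot B.2 Z N.2 0 <| by
    rw [hS.2 B hB N hN hNB.symm]
    exact disjoint_bot_left
  simpa [Set.ofPred_or] using h₁.union h₂

theorem IsSemibrickP.exists_insert_add_smul [Infinite K] {S : Set (ModPtP K Q0 Q1 s t)}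
    (hS : IsSemibrickP K Q0 Q1 s t S) (hfin : S.Finite) {B : ModPtP K Q0 Q1 s t} (hB : B ∈ S)
    {Z : Rep K Q0 Q1 s t B.1} (hZ : Z ∉ range (extMap K Q0 Q1 s t B.2 B.2)) :
    ∃ τ : K, (⟨B.1, B.2 + τ • Z⟩ : ModPtP K Q0 Q1 s t) ∉ S ∧
      IsSemibrickP K Q0 Q1 s t (insert ⟨B.1, B.2 + τ • Z⟩ S) := by
  obtain ⟨τ, hτ⟩ := (((hS.1 B hB).finite_setOf_not_isBrick_add_smul Z).union
    (hfin.biUnion fun N hN => hS.finite_setOf_repHom_ne_bot_of_mem hB hN hZ)).exists_notMem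
  simp only [Set.mem_union, Set.mem_ofPred_eq, Set.mem_iUnion, not_or, not_not, not_exists,
    ne_eq] at hτ
  obtain ⟨hbrick, hhom⟩ := hτ
  exact ⟨τ, fun hmem => repHom_self_ne_bot hbrick.one_ne_zero (hhom _ hmem).1,
    hS.insert_of_repHom_eq_bot hbrick hhom⟩

end RepScheme

theorem RepScheme.path_algebra_semibrick_extension_general
    (K : Type) [Field K] [IsAlgClosed K]
    (Q0 Q1 : Type) [Fintype Q0] [Fintype Q1] (s t : Q1 → Q0)
    (S : Set (ModPtP K Q0 Q1 s t))
    (hsb : IsSemibrickP K Q0 Q1 s t S)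
    (hfin : S.Finite)
    (B : ModPtP K Q0 Q1 s t) (hB : B ∈ S)
    (hnotexc : ¬ Function.Surjective (extMap K Q0 Q1 s t B.2 B.2)) :
    ∃ (l : ℕ), 1 ≤ l ∧ ∃ B' : Rep K Q0 Q1 s t (fun i => l * B.1 i),
      ((⟨fun i => l * B.1 i, B'⟩ : ModPtP K Q0 Q1 s t) ∉ S) ∧
      IsSemibrickP K Q0 Q1 s t (insert ⟨fun i => l * B.1 i, B'⟩ S) := by
  obtain ⟨Z, hZ⟩ := not_forall.mp hnotexc
  obtain ⟨τ, hτ⟩ := hsb.exists_insert_add_smul hfin hB hZ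
  refine ⟨1, le_rfl, ?_⟩
  rw [show (fun i => 1 * B.1 i) = B.1 from funext fun i => one_mul _]
  exact ⟨_, hτ⟩

/-- **Theorem 3.16.** Let `Λ = KQ` with `Q` a finite acyclic quiver and `S` a finite
semibrick. If a brick `B ∈ S` is not exceptional, then there is a brick `B'` such that
`S ⊔ {B'}` is a semibrick and `dim B'` is a positive integer multiple of `dim B`. -/
theorem RepScheme.path_algebra_semibrick_extension
    (K : Type) [Field K] [IsAlgClosed K]
    (Q0 Q1 : Type) [Fintype Q0] [Fintype Q1] (s t : Q1 → Q0)
    (hacyc : IsAcyclic Q0 Q1 s t)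
    (S : Set (ModPtP K Q0 Q1 s t))
    (hsb : IsSemibrickP K Q0 Q1 s t S)
    (hfin : S.Finite)
    (B : ModPtP K Q0 Q1 s t) (hB : B ∈ S)
    (hnotexc : ¬ Function.Surjective (extMap K Q0 Q1 s t B.2 B.2)) :
    ∃ (l : ℕ), 1 ≤ l ∧ ∃ B' : Rep K Q0 Q1 s t (fun i => l * B.1 i),
      ((⟨fun i => l * B.1 i, B'⟩ : ModPtP K Q0 Q1 s t) ∉ S) ∧
      IsSemibrickP K Q0 Q1 s t (insert ⟨fun i => l * B.1 i, B'⟩ S) :=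
  RepScheme.path_algebra_semibrick_extension_general K Q0 Q1 s t S hsb hfin B hB hnotexc
end

section
/- Let Λ = KQ be the path algebra of a finite acyclic quiver Q over an algebraically closed field K, let B be a brick that is not exceptional (i.e., Ext^1_Λ(B,B) ≠ 0), and set θ := ι^{-1}(dim B) ∈ K_0(proj Λ). Then B ∈ F̄_θ, that is, every submodule L of B satisfies θ(L) ≤ 0. -/
/-!
Common setup: representation schemes of a finite dimensional algebra `Λ = KQ/I`
(`Q` a finite quiver, `I` an admissible ideal), following the paper.
-/

namespace RepScheme

variable (K : Type) [Field K]
variable (Q0 Q1 : Type) [Fintype Q0] [Fintype Q1]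
variable (s t : Q1 → Q0)

/-- A subrepresentation (submodule) of a representation point: a family of subspaces
stable under all the arrow matrices. -/
def IsSubrep {d : Q0 → ℕ} (M : Rep K Q0 Q1 s t d)
    (W : ∀ i : Q0, Submodule K (Fin (d i) → K)) : Prop :=
  ∀ a : Q1, ∀ v ∈ W (s a), (M a).mulVec v ∈ W (t a)

/-- The Euler pairing: for the path algebra `KQ` of a finite acyclic quiver, the
`ℤ`-linear form `θ = ι⁻¹(d) ∈ K₀(proj Λ)` (where `ι : K₀(proj Λ) → K₀(mod Λ)` sends `[P]`
to `dim P`, and `⟨[P_i], dim S_j⟩ = δ_{ij}`) satisfies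
`θ(e) = ∑ᵢ dₖ eₖ - ∑ₐ d_{s a} e_{t a}`. -/
def euler (d e : Q0 → ℤ) : ℤ :=
  (∑ i : Q0, d i * e i) - ∑ a : Q1, d (s a) * e (t a)

end RepScheme

/-!
For a subrepresentation `L ⊆ B` with dimension vector `ℓ`, the number
`θ(L) = ∑ᵢ dᵢ ℓᵢ - ∑ₐ d_{s a} ℓ_{t a}` is the dimension of the domain minus that of the
codomain of the map `⊕ᵢ Hom_K(Bᵢ, Lᵢ) → ⊕ₐ Hom_K(B_{s a}, L_{t a})`, `f ↦ f B_a - L_a f`,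
whose kernel is `Hom_Λ(B, L)`. If `L ≠ B`, a morphism `B → L` followed by the inclusion is an
endomorphism of the brick `B`, hence a scalar, and it is not surjective, hence zero: the map is
injective. If `L = B`, its kernel is `End_Λ(B) = K` and its cokernel `Ext¹(B, B)` is nonzero. In both cases the domain is at most as large as the codomain.
-/

theorem LinearMap.finrank_le_of_finrank_ker_le_one_of_not_surjective {K V W : Type*}
    [Field K] [AddCommGroup V] [Module K V] [AddCommGroup W] [Module K W]
    [FiniteDimensional K V] [FiniteDimensional K W] (f : V →ₗ[K] W)
    (hker : Module.finrank K (LinearMap.ker f) ≤ 1) (hf : ¬ Function.Surjective f) :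
    Module.finrank K V ≤ Module.finrank K W := by
  have hrange : Module.finrank K (LinearMap.range f) < Module.finrank K W :=
    Submodule.finrank_lt fun h => hf (LinearMap.range_eq_top.mp h)
  have := f.finrank_range_add_finrank_ker
  omega

namespace RepScheme

variable {K : Type} [Field K] {Q0 Q1 : Type} {s t : Q1 → Q0} {d : Q0 → ℕ}

theorem one_mem_repHom (B : Rep K Q0 Q1 s t d) : (1 : ∀ i, Matrix (Fin (d i)) (Fin (d i)) K) ∈
    RepHom K Q0 Q1 s t B B := fun a => by simp

theorem ker_extMap (B : Rep K Q0 Q1 s t d) :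
    LinearMap.ker (extMap K Q0 Q1 s t B B) = RepHom K Q0 Q1 s t B B := by
  ext f
  simp only [LinearMap.mem_ker, extMap, LinearMap.coe_mk, AddHom.coe_mk, funext_iff,
    Pi.zero_apply, sub_eq_zero]
  rfl

theorem IsBrick.exists_eq_smul_one {B : Rep K Q0 Q1 s t d} (hB : IsBrick K Q0 Q1 s t B)
    {g : ∀ i, Matrix (Fin (d i)) (Fin (d i)) K} (hg : g ∈ RepHom K Q0 Q1 s t B B) :
    ∃ c : K, g = c • 1 := by
  have hone : (⟨1, one_mem_repHom B⟩ : RepHom K Q0 Q1 s t B B) ≠ 0 := by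
    intro h
    have : Subsingleton (∀ i, Matrix (Fin (d i)) (Fin (d i)) K) :=
      subsingleton_of_zero_eq_one (congrArg Subtype.val h).symm
    have : Module.finrank K (RepHom K Q0 Q1 s t B B) = 0 := Module.finrank_zero_of_subsingleton
    rw [IsBrick] at hB
    omega
  obtain ⟨c, hc⟩ := (finrank_eq_one_iff_of_nonzero' _ hone).mp hB ⟨g, hg⟩
  exact ⟨c, (congrArg Subtype.val hc).symm⟩

theorem IsBrick.exists_eq_smul_id {B : Rep K Q0 Q1 s t d} (hB : IsBrick K Q0 Q1 s t B)
    (g : ∀ i, Module.End K (Fin (d i) → K))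
    (hg : ∀ a, g (t a) ∘ₗ (B a).mulVecLin = (B a).mulVecLin ∘ₗ g (s a)) :
    ∃ c : K, ∀ i, g i = c • LinearMap.id := by
  have hmem : (fun i => LinearMap.toMatrix' (g i)) ∈ RepHom K Q0 Q1 s t B B := fun a => by
    simpa only [LinearMap.toMatrix'_comp, ← Matrix.toLin'_apply', LinearMap.toMatrix'_toLin']
      using congrArg LinearMap.toMatrix' (hg a)
  obtain ⟨c, hc⟩ := hB.exists_eq_smul_one hmem
  refine ⟨c, fun i => ?_⟩
  simpa using congrArg Matrix.toLin' (congrFun hc i)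

theorem IsBrick.hom_to_subrep_eq_zero_of_ne_top {B : Rep K Q0 Q1 s t d}
    (hB : IsBrick K Q0 Q1 s t B) {W : ∀ i, Submodule K (Fin (d i) → K)}
    (hW : IsSubrep K Q0 Q1 s t B W) {i₀ : Q0} (hi₀ : W i₀ ≠ ⊤) (f : ∀ i, (Fin (d i) → K) →ₗ[K] W i)
    (hf : ∀ a, f (t a) ∘ₗ (B a).mulVecLin = (B a).mulVecLin.restrict (hW a) ∘ₗ f (s a)) :
    f = 0 := by
  obtain ⟨c, hc⟩ := hB.exists_eq_smul_id (fun i => (W i).subtype ∘ₗ f i) fun a => by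
    rw [LinearMap.comp_assoc, hf a, ← LinearMap.comp_assoc]
    rfl
  have hc₀ : c = 0 := by
    by_contra hc₀
    refine hi₀ (eq_top_iff.mpr fun x _ => ?_)
    have hx : (W i₀).subtype (f i₀ (c⁻¹ • x)) = x := by
      rw [← LinearMap.comp_apply, hc i₀]
      simp [smul_smul, inv_mul_cancel₀ hc₀]
    exact hx ▸ (f i₀ (c⁻¹ • x)).2
  funext i
  refine LinearMap.ext fun v => Subtype.ext ?_
  simpa [hc₀] using LinearMap.congr_fun (hc i) v

def subrepHomMap (B : Rep K Q0 Q1 s t d) {W : ∀ i, Submodule K (Fin (d i) → K)}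
    (hW : IsSubrep K Q0 Q1 s t B W) :
    (∀ i, (Fin (d i) → K) →ₗ[K] W i) →ₗ[K] (∀ a, (Fin (d (s a)) → K) →ₗ[K] W (t a)) where
  toFun f a := f (t a) ∘ₗ (B a).mulVecLin - (B a).mulVecLin.restrict (hW a) ∘ₗ f (s a)
  map_add' f g := by
    funext a
    simp only [Pi.add_apply, LinearMap.add_comp, LinearMap.comp_add]
    abel
  map_smul' c f := by
    funext a
    refine LinearMap.ext fun v => ?_
    simp [smul_sub]

theorem IsBrick.subrepHomMap_injective {B : Rep K Q0 Q1 s t d} (hB : IsBrick K Q0 Q1 s t B)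
    {W : ∀ i, Submodule K (Fin (d i) → K)} (hW : IsSubrep K Q0 Q1 s t B W) {i₀ : Q0}
    (hi₀ : W i₀ ≠ ⊤) : Function.Injective (subrepHomMap B hW) :=
  (injective_iff_map_eq_zero _).mpr fun f hf =>
    hB.hom_to_subrep_eq_zero_of_ne_top hW hi₀ f fun a => sub_eq_zero.mp (congrFun hf a)

theorem IsBrick.sum_mul_finrank_le_of_ne_top [Fintype Q0] [Fintype Q1] {B : Rep K Q0 Q1 s t d}
    (hB : IsBrick K Q0 Q1 s t B) {W : ∀ i, Submodule K (Fin (d i) → K)}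
    (hW : IsSubrep K Q0 Q1 s t B W) {i₀ : Q0} (hi₀ : W i₀ ≠ ⊤) :
    ∑ i, d i * Module.finrank K (W i) ≤ ∑ a, d (s a) * Module.finrank K (W (t a)) := by
  simpa [Module.finrank_pi_fintype, Module.finrank_linearMap] using
    LinearMap.finrank_le_finrank_of_injective (hB.subrepHomMap_injective hW hi₀)

theorem IsBrick.sum_mul_self_le_of_not_surjective_extMap [Fintype Q0] [Fintype Q1]
    {B : Rep K Q0 Q1 s t d} (hB : IsBrick K Q0 Q1 s t B)
    (hext : ¬ Function.Surjective (extMap K Q0 Q1 s t B B)) :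
    ∑ i, d i * d i ≤ ∑ a, d (s a) * d (t a) := by
  have hker : Module.finrank K (LinearMap.ker (extMap K Q0 Q1 s t B B)) ≤ 1 := by
    rw [ker_extMap]
    exact hB.le
  simpa [Module.finrank_pi_fintype, Module.finrank_matrix, mul_comm] using
    (extMap K Q0 Q1 s t B B).finrank_le_of_finrank_ker_le_one_of_not_surjective hker hext

end RepScheme

theorem RepScheme.nonexceptional_brick_mem_Fbar_general
    (K : Type) [Field K]
    (Q0 Q1 : Type) [Fintype Q0] [Fintype Q1] (s t : Q1 → Q0)
    (d : Q0 → ℕ) (B : Rep K Q0 Q1 s t d)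
    (hbrick : IsBrick K Q0 Q1 s t B)
    (hnotexc : ¬ Function.Surjective (extMap K Q0 Q1 s t B B)) :
    ∀ W : ∀ i : Q0, Submodule K (Fin (d i) → K), IsSubrep K Q0 Q1 s t B W →
      euler Q0 Q1 s t (fun i => (d i : ℤ)) (fun i => (Module.finrank K (W i) : ℤ)) ≤ 0 := by
  intro W hW
  rw [euler, sub_nonpos]
  by_cases htop : ∀ i, W i = ⊤
  · have hdim : ∀ i, Module.finrank K (W i) = d i := fun i => by
      rw [htop i, finrank_top, Module.finrank_fin_fun]
    simp only [hdim]
    exact_mod_cast hbrick.sum_mul_self_le_of_not_surjective_extMap hnotexc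
  · obtain ⟨i₀, hi₀⟩ := not_forall.mp htop
    exact_mod_cast hbrick.sum_mul_finrank_le_of_ne_top hW hi₀

/-- **Lemma 3.13.** Let `Λ = KQ` with `Q` a finite acyclic quiver and let `B` be a
non-exceptional brick. Set `θ := ι⁻¹(dim B) ∈ K₀(proj Λ)`. Then `B ∈ F̄_θ`, i.e.
every submodule `L ⊆ B` satisfies `θ(L) ≤ 0`. -/
theorem RepScheme.nonexceptional_brick_mem_Fbar
    (K : Type) [Field K] [IsAlgClosed K]
    (Q0 Q1 : Type) [Fintype Q0] [Fintype Q1] (s t : Q1 → Q0)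
    (hacyc : IsAcyclic Q0 Q1 s t)
    (d : Q0 → ℕ) (B : Rep K Q0 Q1 s t d)
    (hbrick : IsBrick K Q0 Q1 s t B)
    (hnotexc : ¬ Function.Surjective (extMap K Q0 Q1 s t B B)) :
    ∀ W : ∀ i : Q0, Submodule K (Fin (d i) → K), IsSubrep K Q0 Q1 s t B W →
      euler Q0 Q1 s t (fun i => (d i : ℤ)) (fun i => (Module.finrank K (W i) : ℤ)) ≤ 0 :=
  RepScheme.nonexceptional_brick_mem_Fbar_general K Q0 Q1 s t d B hbrick hnotexc
end
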